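/- arXiv:2203.03687 — 5 statements merged into one kernel-verified Lean document; each statement's English description precedes it below -/
import Mathlib

section
/- Let 𝔖 be a set association scheme on a finite set Ω. If α is a cell of 𝔖, then the set of complements α^c = {Ω \ a : a ∈ α} is also a cell of 𝔖. -/
namespace Paper


def IsTriangle {Ω : Type*} (a b c : Set Ω) : Prop :=
  a ⊆ b ∪ c ∧ b ⊆ a ∪ c ∧ c ⊆ a ∪ b

noncomputable def tripleType {Ω : Type*} (a b c : Set Ω) : ℕ × ℕ × ℕ × ℕ × ℕ × ℕ × ℕ :=
  (a.ncard, b.ncard, c.ncard, (a ∩ b).ncard, (a ∩ c).ncard, (b ∩ c).ncard, (a ∩ b ∩ c).ncard)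

noncomputable def typeCount {Ω : Type*} (β γ : Set (Set Ω)) (a : Set Ω) (τ : ℕ × ℕ × ℕ × ℕ × ℕ × ℕ × ℕ) : ℕ :=
  {p : Set Ω × Set Ω | p.1 ∈ β ∧ p.2 ∈ γ ∧ tripleType a p.1 p.2 = τ}.ncard

def IsSAS {Ω : Type*} (S : Set (Set (Set Ω))) : Prop :=
  Setoid.IsPartition S ∧
  (∀ α ∈ S, ∀ a ∈ α, ∀ a' ∈ α, Set.ncard a = Set.ncard a') ∧
  (∀ α ∈ S, ∀ β ∈ S, ∀ γ ∈ S, ∀ a ∈ α, ∀ a' ∈ α,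
    ∀ t₁ t₂ t₃ : Set Ω, IsTriangle t₁ t₂ t₃ →
      typeCount β γ a (tripleType t₁ t₂ t₃) = typeCount β γ a' (tripleType t₁ t₂ t₃))

def SetHomog {Ω : Type*} (S : Set (Set (Set Ω))) : Prop :=
  {a : Set Ω | ∃ v : Ω, a = {v}} ∈ S

/-!
The triangle `(a, aᶜ, Ω)` has a type that pins down the other two sides once the first is
fixed: a pair `(b, c)` completes `a` to a triple of that type exactly when `b = aᶜ` and `c = Ω`.
So, with `β` the cell of `a₀ᶜ` for some `a₀ ∈ α` and `γ` the cell of `Ω`, the count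
`typeCount β γ a (tripleType a aᶜ Ω)` is nonzero iff `aᶜ ∈ β`; it is nonzero for `a = a₀`, hence,
by regularity of the scheme, for every `a ∈ α`. Exchanging the roles of `α` and `β` shows that
complementation maps `α` onto `β`.
-/

open Set

lemma isTriangle_compl_univ {Ω : Type*} (a : Set Ω) : IsTriangle a aᶜ univ := by
  refine ⟨?_, ?_, ?_⟩ <;> simp

lemma tripleType_compl_univ_congr {Ω : Type*} [Finite Ω] {a a' : Set Ω}
    (h : a.ncard = a'.ncard) : tripleType a aᶜ univ = tripleType a' a'ᶜ univ := by
  simp [tripleType, ncard_compl a, ncard_compl a', h]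

lemma tripleType_eq_compl_univ_iff {Ω : Type*} [Finite Ω] {a b c : Set Ω} :
    tripleType a b c = tripleType a aᶜ univ ↔ b = aᶜ ∧ c = univ := by
  refine ⟨fun h => ?_, fun ⟨hb, hc⟩ => hb ▸ hc ▸ rfl⟩
  simp only [tripleType, Prod.mk.injEq, inter_compl_self, ncard_empty] at h
  obtain ⟨-, hb, hc, hab, -⟩ := h
  have hba : b ⊆ aᶜ := subset_compl_iff_disjoint_left.mpr
    (disjoint_iff_inter_eq_empty.mpr ((ncard_eq_zero (toFinite _)).mp hab))
  exact ⟨eq_of_subset_of_ncard_le hba hb.ge, eq_of_subset_of_ncard_le (subset_univ c) hc.ge⟩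

lemma typeCount_compl_univ_pos_iff {Ω : Type*} [Finite Ω] {β γ : Set (Set Ω)} {a : Set Ω} :
    0 < typeCount β γ a (tripleType a aᶜ univ) ↔ aᶜ ∈ β ∧ univ ∈ γ := by
  rw [typeCount, ncard_pos]
  constructor
  · rintro ⟨⟨b, c⟩, hb, hc, htype⟩
    obtain ⟨rfl, rfl⟩ := tripleType_eq_compl_univ_iff.mp htype
    exact ⟨hb, hc⟩
  · rintro ⟨hb, hc⟩
    exact ⟨(aᶜ, univ), hb, hc, rfl⟩

lemma IsSAS.compl_mem_of_compl_mem {Ω : Type*} [Finite Ω] {S : Set (Set (Set Ω))} (hS : IsSAS S)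
    {α β : Set (Set Ω)} (hα : α ∈ S) (hβ : β ∈ S) {a₀ a : Set Ω} (ha₀ : a₀ ∈ α) (ha : a ∈ α)
    (ha₀β : a₀ᶜ ∈ β) : aᶜ ∈ β := by
  obtain ⟨γ, ⟨hγ, hunivγ⟩, -⟩ := hS.1.2 (univ : Set Ω)
  have hcount := hS.2.2 α hα β hβ γ hγ a₀ ha₀ a ha _ _ _ (isTriangle_compl_univ a₀)
  have hpos := typeCount_compl_univ_pos_iff.mpr ⟨ha₀β, hunivγ⟩
  rw [hcount, tripleType_compl_univ_congr (hS.2.1 α hα a₀ ha₀ a ha)] at hpos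
  exact (typeCount_compl_univ_pos_iff.mp hpos).1

theorem stmt2 {Ω : Type*} [Finite Ω] (S : Set (Set (Set Ω))) (hS : IsSAS S)
    (α : Set (Set Ω)) (hα : α ∈ S) :
    (fun a : Set Ω => aᶜ) '' α ∈ S := by
  obtain ⟨a₀, ha₀⟩ : α.Nonempty := nonempty_iff_ne_empty.mpr fun h => hS.1.1 (h ▸ hα)
  obtain ⟨β, ⟨hβ, ha₀β⟩, -⟩ := hS.1.2 a₀ᶜ
  have hαβ : ∀ a ∈ α, aᶜ ∈ β := fun a ha => hS.compl_mem_of_compl_mem hα hβ ha₀ ha ha₀β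
  have hβα : ∀ b ∈ β, bᶜ ∈ α := fun b hb =>
    hS.compl_mem_of_compl_mem hβ hα ha₀β hb ((compl_compl a₀).symm ▸ ha₀)
  have himage : (fun a : Set Ω => aᶜ) '' α = β := by
    ext b
    exact ⟨fun ⟨a, ha, hab⟩ => hab ▸ hαβ a ha, fun hb => ⟨bᶜ, hβα b hb, compl_compl b⟩⟩
  exact himage ▸ hβ

end Paper
end

section
/- Let 𝔖 be a set association scheme on a finite set Ω and let α, β be cells of 𝔖. Then the bipartite containment graph {(a, b) ∈ α × β : a ⊆ b} is biregular: the number of b ∈ β with a ⊆ b is the same for every a ∈ α, and the number of a ∈ α with a ⊆ b is the same for every b ∈ β. -/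
namespace Paper


/-!
Cells have constant cardinality, so a triple `(a, b, c)` with `b, c` in the cell of `b₀` has the
type of the triangle `(a₀, b₀, b₀)`, where `a₀ ⊆ b₀` and `|a| = |a₀|`, exactly when `a ⊆ b = c`.
Hence the regularity axiom for this type says that the number of supersets of `a` in `β` does
not depend on `a ∈ α`. Dually, `(b, a, c)` has the type of `(b₀, a₀, b₀)` exactly when
`a ⊆ b = c`, which counts the subsets of `b` in `α`. The pair `a₀ ⊆ b₀` is taken from whichever
count is nonzero; if both vanish there is nothing to prove.
-/

lemma ncard_inter_eq_left_iff {Ω : Type*} [Finite Ω] {s t : Set Ω} :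
    (s ∩ t).ncard = s.ncard ↔ s ⊆ t := by
  refine ⟨fun h => ?_, fun h => by rw [Set.inter_eq_left.mpr h]⟩
  rw [← Set.eq_of_subset_of_ncard_le Set.inter_subset_left h.ge]
  exact Set.inter_subset_right

lemma isTriangle_sub_sup_sup {Ω : Type*} {a b : Set Ω} (h : a ⊆ b) : IsTriangle a b b :=
  ⟨h.trans Set.subset_union_left, Set.subset_union_right, Set.subset_union_right⟩

lemma isTriangle_sup_sub_sup {Ω : Type*} {a b : Set Ω} (h : a ⊆ b) : IsTriangle b a b :=
  ⟨Set.subset_union_right, h.trans Set.subset_union_right, Set.subset_union_left⟩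

section Fibres

variable {Ω : Type*} [Finite Ω] {a b c a₀ b₀ : Set Ω}

lemma tripleType_eq_sub_sup_sup_iff (h₀ : a₀ ⊆ b₀) (ha : a.ncard = a₀.ncard)
    (hb : b.ncard = b₀.ncard) (hc : c.ncard = b₀.ncard) :
    tripleType a b c = tripleType a₀ b₀ b₀ ↔ a ⊆ b ∧ b = c := by
  simp only [tripleType, Prod.mk.injEq, Set.inter_self, Set.inter_eq_left.mpr h₀]
  constructor
  · rintro ⟨-, -, -, hab, -, hbc, -⟩
    refine ⟨ncard_inter_eq_left_iff.mp (hab.trans ha.symm),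
      (ncard_inter_eq_left_iff.mp (hbc.trans hb.symm)).antisymm ?_⟩
    exact ncard_inter_eq_left_iff.mp (by rw [Set.inter_comm, hbc, hc])
  · rintro ⟨hab, rfl⟩
    rw [Set.inter_self, Set.inter_eq_left.mpr hab, Set.inter_eq_left.mpr hab]
    exact ⟨ha, hb, hb, ha, ha, hb, ha⟩

lemma tripleType_eq_sup_sub_sup_iff (h₀ : a₀ ⊆ b₀) (ha : a.ncard = a₀.ncard)
    (hb : b.ncard = b₀.ncard) (hc : c.ncard = b₀.ncard) :
    tripleType b a c = tripleType b₀ a₀ b₀ ↔ a ⊆ b ∧ b = c := by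
  have h₀' : b₀ ∩ a₀ = a₀ := Set.inter_eq_right.mpr h₀
  simp only [tripleType, Prod.mk.injEq, Set.inter_self, h₀', Set.inter_comm a₀ b₀]
  constructor
  · rintro ⟨-, -, -, hba, hbc, -, -⟩
    refine ⟨ncard_inter_eq_left_iff.mp (by rw [Set.inter_comm, hba, ha]),
      (ncard_inter_eq_left_iff.mp (hbc.trans hb.symm)).antisymm ?_⟩
    exact ncard_inter_eq_left_iff.mp (by rw [Set.inter_comm, hbc, hc])
  · rintro ⟨hab, rfl⟩
    simp only [Set.inter_self, Set.inter_eq_right.mpr hab, Set.inter_eq_left.mpr hab]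
    exact ⟨hb, ha, hb, ha, hb, ha, ha⟩

variable {α β : Set (Set Ω)}

lemma typeCount_eq_ncard_supersets (h₀ : a₀ ⊆ b₀) (ha : a.ncard = a₀.ncard)
    (hβ : ∀ b ∈ β, b.ncard = b₀.ncard) :
    typeCount β β a (tripleType a₀ b₀ b₀) = {b | b ∈ β ∧ a ⊆ b}.ncard := by
  have hfibre : {p : Set Ω × Set Ω | p.1 ∈ β ∧ p.2 ∈ β ∧ tripleType a p.1 p.2 =
      tripleType a₀ b₀ b₀} = (fun b => (b, b)) '' {b | b ∈ β ∧ a ⊆ b} := by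
    ext ⟨b, c⟩
    constructor
    · rintro ⟨hb, hc, htype⟩
      obtain ⟨hab, rfl⟩ := (tripleType_eq_sub_sup_sup_iff h₀ ha (hβ b hb) (hβ c hc)).mp htype
      exact ⟨b, ⟨hb, hab⟩, rfl⟩
    · rintro ⟨b, ⟨hb, hab⟩, ⟨⟩⟩
      exact ⟨hb, hb, (tripleType_eq_sub_sup_sup_iff h₀ ha (hβ b hb) (hβ b hb)).mpr ⟨hab, rfl⟩⟩
  rw [typeCount, hfibre, Set.ncard_image_of_injective _ fun _ _ h => (Prod.mk.inj h).1]

lemma typeCount_eq_ncard_subsets (h₀ : a₀ ⊆ b₀) (hα : ∀ a ∈ α, a.ncard = a₀.ncard)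
    (hβ : ∀ b ∈ β, b.ncard = b₀.ncard) (hb : b ∈ β) :
    typeCount α β b (tripleType b₀ a₀ b₀) = {a | a ∈ α ∧ a ⊆ b}.ncard := by
  have hfibre : {p : Set Ω × Set Ω | p.1 ∈ α ∧ p.2 ∈ β ∧ tripleType b p.1 p.2 =
      tripleType b₀ a₀ b₀} = (fun a => (a, b)) '' {a | a ∈ α ∧ a ⊆ b} := by
    ext ⟨a, c⟩
    constructor
    · rintro ⟨ha, hc, htype⟩
      obtain ⟨hab, rfl⟩ :=
        (tripleType_eq_sup_sub_sup_iff h₀ (hα a ha) (hβ b hb) (hβ c hc)).mp htype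
      exact ⟨a, ⟨ha, hab⟩, rfl⟩
    · rintro ⟨a, ⟨ha, hab⟩, ⟨⟩⟩
      exact ⟨ha, hb,
        (tripleType_eq_sup_sub_sup_iff h₀ (hα a ha) (hβ b hb) (hβ b hb)).mpr ⟨hab, rfl⟩⟩
  rw [typeCount, hfibre, Set.ncard_image_of_injective _ fun _ _ h => (Prod.mk.inj h).1]

end Fibres

lemma forall_eq_of_ne_zero_imp_eq {ι : Type*} {s : Set ι} {f : ι → ℕ}
    (h : ∀ x ∈ s, ∀ y ∈ s, f y ≠ 0 → f x = f y) : ∀ x ∈ s, ∀ y ∈ s, f x = f y := by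
  intro x hx y hy
  by_cases hfy : f y = 0
  · by_cases hfx : f x = 0
    · rw [hfx, hfy]
    · exact (h y hy x hx hfx).symm
  · exact h x hx y hy hfy

theorem stmt3 {Ω : Type*} [Finite Ω] (S : Set (Set (Set Ω))) (hS : IsSAS S)
    (α β : Set (Set Ω)) (hα : α ∈ S) (hβ : β ∈ S) :
    (∀ a ∈ α, ∀ a' ∈ α,
      {b : Set Ω | b ∈ β ∧ a ⊆ b}.ncard = {b : Set Ω | b ∈ β ∧ a' ⊆ b}.ncard) ∧
    (∀ b ∈ β, ∀ b' ∈ β,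
      {a : Set Ω | a ∈ α ∧ a ⊆ b}.ncard = {a : Set Ω | a ∈ α ∧ a ⊆ b'}.ncard) := by
  obtain ⟨-, hsize, hregular⟩ := hS
  constructor
  · refine forall_eq_of_ne_zero_imp_eq fun a ha a' ha' hne => ?_
    obtain ⟨b₀, hb₀, hab₀⟩ := Set.nonempty_of_ncard_ne_zero hne
    have hβsize : ∀ b ∈ β, b.ncard = b₀.ncard := fun b hb => hsize β hβ b hb b₀ hb₀
    have hcount := hregular α hα β hβ β hβ a ha a' ha' a' b₀ b₀ (isTriangle_sub_sup_sup hab₀)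
    rwa [typeCount_eq_ncard_supersets hab₀ (hsize α hα a ha a' ha') hβsize,
      typeCount_eq_ncard_supersets hab₀ rfl hβsize] at hcount
  · refine forall_eq_of_ne_zero_imp_eq fun b hb b' hb' hne => ?_
    obtain ⟨a₀, ha₀, ha₀b⟩ := Set.nonempty_of_ncard_ne_zero hne
    have hαsize : ∀ a ∈ α, a.ncard = a₀.ncard := fun a ha => hsize α hα a ha a₀ ha₀
    have hβsize : ∀ c ∈ β, c.ncard = b'.ncard := fun c hc => hsize β hβ c hc b' hb'
    have hcount := hregular β hβ α hα β hβ b hb b' hb' b' a₀ b' (isTriangle_sup_sub_sup ha₀b)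
    rwa [typeCount_eq_ncard_subsets ha₀b hαsize hβsize hb,
      typeCount_eq_ncard_subsets ha₀b hαsize hβsize hb'] at hcount

end Paper
end

section
/- Let m, d ≥ 1 and let 𝔖 be a set association scheme on Ω = [d]. Then 𝔛 = [m]^𝔖 is an association scheme on [m]^d, and T_m^d ≤ 𝔛 ≤ Ham(m, d). -/
/-!
Write `D(u, v)` for the set of coordinates where `u` and `v` differ. If `D(u, v) = a`, the
number of `w` with `D(u, w) = b` and `D(w, v) = c` is a product over coordinates: it is zero
unless `(a, b, c)` is a triangle, and otherwise each coordinate of `(b ∩ c) \ a` leaves `m - 1`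
choices for `w i`, each coordinate of `a ∩ b ∩ c` leaves `m - 2`, and all others are forced.
So it depends only on the type of `(a, b, c)`. Summing over `(b, c) ∈ β × γ` and grouping by
type, the intersection number of `[m]^𝔖` at `(u, v)` becomes
`∑ τ, typeCount β γ a τ * pathCount m τ`, where only triangle types contribute; the defining
property of a set association scheme makes this independent of `a` within its cell. The remaining axioms hold because cells of `𝔖` have
constant size (so `{∅}` is a cell) and `D` is symmetric.
-/

namespace Paper


def diag (V : Type*) : Set (V × V) := {p | p.1 = p.2}

def IsCoherent {V : Type*} (X : Set (Set (V × V))) : Prop :=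
  ∀ R ∈ X, ∀ S ∈ X, ∀ T ∈ X, ∃ p : ℕ, ∀ q : V × V, q ∈ R →
    {w : V | (q.1, w) ∈ S ∧ (w, q.2) ∈ T}.ncard = p

def IsAssocScheme {V : Type*} (X : Set (Set (V × V))) : Prop :=
  Setoid.IsPartition X ∧ diag V ∈ X ∧
  (∀ R ∈ X, ∀ x y : V, (x, y) ∈ R → (y, x) ∈ R) ∧ IsCoherent X

def cellGraph {V : Type*} (R : Set (V × V)) : SimpleGraph V :=
  SimpleGraph.fromRel (fun x y => (x, y) ∈ R)

def IsPrimitiveScheme {V : Type*} (X : Set (Set (V × V))) : Prop :=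
  ∀ R ∈ X, R ≠ diag V → (cellGraph R).Connected

def schemeAut {V : Type*} (X : Set (Set (V × V))) : Subgroup (Equiv.Perm V) where
  carrier := {g | ∀ R ∈ X, ∀ x y : V, (x, y) ∈ R ↔ (g x, g y) ∈ R}
  one_mem' := by intro R _ x y; simp
  mul_mem' := by
    intro g h hg hh R hR x y
    have := (hh R hR x y).trans (hg R hR (h x) (h y))
    simpa using this
  inv_mem' := by
    intro g hg R hR x y
    have := (hg R hR (g⁻¹ x) (g⁻¹ y)).symm
    simpa using this

def diffSet {m d : ℕ} (p : (Fin d → Fin m) × (Fin d → Fin m)) : Set (Fin d) :=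
  {i | p.1 i ≠ p.2 i}

def relOf (m d : ℕ) (α : Set (Set (Fin d))) : Set ((Fin d → Fin m) × (Fin d → Fin m)) :=
  {p | diffSet p ∈ α}

def mPow (m d : ℕ) (S : Set (Set (Set (Fin d)))) :
    Set (Set ((Fin d → Fin m) × (Fin d → Fin m))) :=
  {R | R.Nonempty ∧ ∃ α ∈ S, R = relOf m d α}

def tensorTrivial (m d : ℕ) : Set (Set ((Fin d → Fin m) × (Fin d → Fin m))) :=
  {R | R.Nonempty ∧ ∃ a : Set (Fin d), R = {p | diffSet p = a}}

def hammingScheme (m d : ℕ) : Set (Set ((Fin d → Fin m) × (Fin d → Fin m))) :=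
  {R | R.Nonempty ∧ ∃ t : ℕ, R = {p | (diffSet p).ncard = t}}

def Refines {W : Type*} (X X' : Set (Set W)) : Prop :=
  ∀ R ∈ X, ∃ R' ∈ X', R ⊆ R'

open Finset

section TriangleType

variable {Ω : Type*} [Finite Ω]

theorem ncard_add_ncard_inter_inter_eq_iff_subset_union (a b c : Set Ω) :
    a.ncard + (a ∩ b ∩ c).ncard = (a ∩ b).ncard + (a ∩ c).ncard ↔ a ⊆ b ∪ c := by
  have h := Set.ncard_union_add_ncard_inter (a ∩ b) (a ∩ c)
  rw [← Set.inter_union_distrib_left, ← Set.inter_inter_distrib_left, ← Set.inter_assoc] at h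
  constructor
  · intro hsum
    exact Set.inter_eq_left.mp <|
      Set.eq_of_subset_of_ncard_le Set.inter_subset_left (by omega)
  · intro hsub
    rw [Set.inter_eq_left.mpr hsub] at h
    omega

theorem isTriangle_iff_ncard (a b c : Set Ω) :
    IsTriangle a b c ↔
      a.ncard + (a ∩ b ∩ c).ncard = (a ∩ b).ncard + (a ∩ c).ncard ∧
      b.ncard + (a ∩ b ∩ c).ncard = (a ∩ b).ncard + (b ∩ c).ncard ∧
      c.ncard + (a ∩ b ∩ c).ncard = (a ∩ c).ncard + (b ∩ c).ncard := by
  have hb := ncard_add_ncard_inter_inter_eq_iff_subset_union b a c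
  have hc := ncard_add_ncard_inter_inter_eq_iff_subset_union c a b
  rw [Set.inter_comm b a] at hb
  rw [Set.inter_comm c a, Set.inter_comm c b, Set.inter_right_comm a c b] at hc
  rw [IsTriangle, ← ncard_add_ncard_inter_inter_eq_iff_subset_union, hb, hc]

/-- On the type of `(a, b, c)` this is `(q - 1) ^ #((b ∩ c) \ a) * (q - 2) ^ #(a ∩ b ∩ c)`, or `0`
when the guard, the triangle condition in inclusion–exclusion form, fails. -/
def pathCount (q : ℕ) : ℕ × ℕ × ℕ × ℕ × ℕ × ℕ × ℕ → ℕ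
  | (na, nb, nc, nab, nac, nbc, nabc) =>
    if na + nabc = nab + nac ∧ nb + nabc = nab + nbc ∧ nc + nabc = nac + nbc
    then (q - 1) ^ (nbc - nabc) * (q - 2) ^ nabc else 0

open Classical in
theorem pathCount_tripleType (q : ℕ) (a b c : Set Ω) :
    pathCount q (tripleType a b c) =
      if IsTriangle a b c then (q - 1) ^ ((b ∩ c) \ a).ncard * (q - 2) ^ (a ∩ b ∩ c).ncard
      else 0 := by
  have hdiff : ((b ∩ c) \ a).ncard = (b ∩ c).ncard - (a ∩ b ∩ c).ncard := by
    rw [← Set.ncard_inter_add_ncard_sdiff_eq_ncard (b ∩ c) a, Set.inter_comm (b ∩ c),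
      ← Set.inter_assoc]
    omega
  simp only [pathCount, tripleType, ← isTriangle_iff_ncard, hdiff]

theorem pathCount_tripleType_eq_zero {q : ℕ} {a b c : Set Ω} (h : ¬IsTriangle a b c) :
    pathCount q (tripleType a b c) = 0 := by
  classical
  rw [pathCount_tripleType, if_neg h]

end TriangleType

section Paths

variable {ι α : Type*}

theorem isTriangle_setOf_ne (u v w : ι → α) :
    IsTriangle {i | u i ≠ v i} {i | u i ≠ w i} {i | w i ≠ v i} := by
  refine ⟨fun i h => ?_, fun i h => ?_, fun i h => ?_⟩ <;>
    simp only [Set.mem_union, Set.mem_ofPred_eq] at h ⊢ <;> grind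

open Classical in
theorem ncard_setOf_ne_iff_and_ne_iff [Finite α] (x y : α) {P Q : Prop}
    (hxy : x ≠ y → P ∨ Q) (hP : P → x ≠ y ∨ Q) (hQ : Q → x ≠ y ∨ P) :
    {z | (x ≠ z ↔ P) ∧ (z ≠ y ↔ Q)}.ncard =
      (if x ≠ y ∧ P ∧ Q then Nat.card α - 2 else 1) *
      (if P ∧ Q ∧ x = y then Nat.card α - 1 else 1) := by
  by_cases hp : P <;> by_cases hq : Q
  · rw [show {z | (x ≠ z ↔ P) ∧ (z ≠ y ↔ Q)} = {x, y}ᶜ by ext; simp [hp, hq, eq_comm],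
      Set.ncard_compl]
    by_cases he : x = y
    · simp [he, hp, hq]
    · simp [Set.ncard_pair he, he, hp, hq]
  · have he : x ≠ y := (hP hp).resolve_right hq
    rw [show {z | (x ≠ z ↔ P) ∧ (z ≠ y ↔ Q)} = {y} by ext; grind]
    simp [hq]
  · have he : x ≠ y := (hQ hq).resolve_right hp
    rw [show {z | (x ≠ z ↔ P) ∧ (z ≠ y ↔ Q)} = {x} by ext; grind]
    simp [hp]
  · have he : x = y := not_not.mp fun h => (hxy h).elim hp hq
    rw [show {z | (x ≠ z ↔ P) ∧ (z ≠ y ↔ Q)} = {x} by ext; grind]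
    simp [hp]

theorem ncard_univ_pi [Fintype ι] {β : ι → Type*} (t : ∀ i, Set (β i)) :
    (Set.univ.pi t).ncard = ∏ i, (t i).ncard := by
  simp only [← Nat.card_coe_set_eq, Nat.card_congr (Equiv.Set.univPi t), Nat.card_pi]

theorem prod_ite_mem_eq_pow_ncard [Fintype ι] {M : Type*} [CommMonoid M] (s : Set ι)
    [DecidablePred (· ∈ s)] (x : M) :
    ∏ i, (if i ∈ s then x else 1) = x ^ s.ncard := by
  classical
  rw [Set.ncard_eq_toFinset_card', ← Finset.prod_const, ← Finset.prod_ite_mem_eq s.toFinset]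
  simp only [Set.mem_toFinset]

theorem ncard_setOf_ne_eq_pathCount [Fintype ι] [Finite α] (u v : ι → α) (b c : Set ι) :
    {w : ι → α | {i | u i ≠ w i} = b ∧ {i | w i ≠ v i} = c}.ncard =
      pathCount (Nat.card α) (tripleType {i | u i ≠ v i} b c) := by
  classical
  set a := {i | u i ≠ v i}
  by_cases htri : IsTriangle a b c
  · have hpi : {w : ι → α | {i | u i ≠ w i} = b ∧ {i | w i ≠ v i} = c} =
        Set.univ.pi fun i => {z | (u i ≠ z ↔ i ∈ b) ∧ (z ≠ v i ↔ i ∈ c)} := by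
      ext w
      simp [Set.ext_iff, forall_and]
    rw [hpi, ncard_univ_pi, pathCount_tripleType, if_pos htri]
    calc ∏ i, {z | (u i ≠ z ↔ i ∈ b) ∧ (z ≠ v i ↔ i ∈ c)}.ncard
        = ∏ i, (if i ∈ a ∩ b ∩ c then Nat.card α - 2 else 1) *
            (if i ∈ (b ∩ c) \ a then Nat.card α - 1 else 1) := by
          refine Finset.prod_congr rfl fun i _ => ?_
          rw [ncard_setOf_ne_iff_and_ne_iff _ _ (htri.1 ·) (htri.2.1 ·) (htri.2.2 ·)]
          simp [a, and_assoc]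
      _ = _ := by
          rw [Finset.prod_mul_distrib, prod_ite_mem_eq_pow_ncard, prod_ite_mem_eq_pow_ncard,
            mul_comm]
  · rw [pathCount_tripleType_eq_zero htri, Set.ncard_eq_zero, Set.eq_empty_iff_forall_notMem]
    rintro w ⟨rfl, rfl⟩
    exact htri (isTriangle_setOf_ne u v w)

open Classical in
theorem ncard_setOf_ne_mem_eq_sum [Fintype ι] [Finite α] (u v : ι → α) (β γ : Set (Set ι)) :
    {w : ι → α | {i | u i ≠ w i} ∈ β ∧ {i | w i ≠ v i} ∈ γ}.ncard =
      ∑ p ∈ (β ×ˢ γ).toFinset, pathCount (Nat.card α) (tripleType {i | u i ≠ v i} p.1 p.2) := by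
  have := Fintype.ofFinite α
  let f : (ι → α) → Set ι × Set ι := fun w => ({i | u i ≠ w i}, {i | w i ≠ v i})
  calc {w : ι → α | {i | u i ≠ w i} ∈ β ∧ {i | w i ≠ v i} ∈ γ}.ncard
      = #{w | f w ∈ (β ×ˢ γ).toFinset} := by
        rw [Set.ncard_eq_toFinset_card']
        simp [f]
    _ = ∑ p ∈ (β ×ˢ γ).toFinset, #{w | f w = p} :=
        (sum_card_fiberwise_eq_card_filter _ _ _).symm
    _ = _ := by
        refine sum_congr rfl fun p _ => ?_
        rw [← ncard_setOf_ne_eq_pathCount, Set.ncard_eq_toFinset_card']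
        simp [f, Prod.ext_iff]

end Paths

theorem sum_comp_eq_sum_comp_of_card_filter_eq {X X' K M : Type*} [DecidableEq K]
    [AddCommMonoid M] {s : Finset X} {s' : Finset X'} {f : X → K} {f' : X' → K} {g : K → M}
    (h : ∀ k, g k ≠ 0 → #{x ∈ s | f x = k} = #{x ∈ s' | f' x = k}) :
    ∑ x ∈ s, g (f x) = ∑ x ∈ s', g (f' x) := by
  let U := s.image f ∪ s'.image f'
  rw [← sum_fiberwise_of_maps_to' (t := U) (fun x hx => mem_union_left _ (mem_image_of_mem f hx)),
    ← sum_fiberwise_of_maps_to' (t := U) (fun x hx => mem_union_right _ (mem_image_of_mem f' hx))]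
  refine sum_congr rfl fun k _ => ?_
  by_cases hk : g k = 0
  · simp [hk]
  · simp only [sum_const, h k hk]

open Classical in
theorem typeCount_eq_card_filter {Ω : Type*} [Fintype Ω] (β γ : Set (Set Ω)) (a : Set Ω)
    (τ : ℕ × ℕ × ℕ × ℕ × ℕ × ℕ × ℕ) :
    typeCount β γ a τ = #{p ∈ (β ×ˢ γ).toFinset | tripleType a p.1 p.2 = τ} := by
  rw [typeCount, ← Set.ncard_coe_finset]
  congr 1
  ext p
  simp [and_assoc]

open Classical in
theorem IsSAS.card_filter_tripleType_eq {Ω : Type*} [Fintype Ω] {S : Set (Set (Set Ω))}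
    (hS : IsSAS S) {α β γ : Set (Set Ω)} (hα : α ∈ S) (hβ : β ∈ S) (hγ : γ ∈ S)
    {a a' : Set Ω} (ha : a ∈ α) (ha' : a' ∈ α) {q : ℕ} {τ : ℕ × ℕ × ℕ × ℕ × ℕ × ℕ × ℕ}
    (hτ : pathCount q τ ≠ 0) :
    #{p ∈ (β ×ˢ γ).toFinset | tripleType a p.1 p.2 = τ} =
      #{p ∈ (β ×ˢ γ).toFinset | tripleType a' p.1 p.2 = τ} := by
  by_cases hreal : ∃ t₁ t₂ t₃ : Set Ω, IsTriangle t₁ t₂ t₃ ∧ tripleType t₁ t₂ t₃ = τ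
  · obtain ⟨t₁, t₂, t₃, ht, rfl⟩ := hreal
    rw [← typeCount_eq_card_filter, ← typeCount_eq_card_filter]
    exact hS.2.2 α hα β hβ γ hγ a ha a' ha' t₁ t₂ t₃ ht
  · have hempty (x : Set Ω) : {p ∈ (β ×ˢ γ).toFinset | tripleType x p.1 p.2 = τ} = ∅ := by
      refine filter_eq_empty_iff.mpr fun p _ hp => hreal ⟨x, p.1, p.2, ?_, hp⟩
      by_contra hnot
      exact hτ (hp ▸ pathCount_tripleType_eq_zero hnot)
    rw [hempty, hempty]

section Power

variable {m d : ℕ} {S : Set (Set (Set (Fin d)))}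

theorem diffSet_comm (u v : Fin d → Fin m) : diffSet (u, v) = diffSet (v, u) := by
  ext i
  exact ne_comm

theorem diffSet_eq_empty_iff {p : (Fin d → Fin m) × (Fin d → Fin m)} :
    diffSet p = ∅ ↔ p.1 = p.2 := by
  simp [diffSet, Set.eq_empty_iff_forall_notMem, funext_iff]

theorem isPartition_mPow (hS : Setoid.IsPartition S) : Setoid.IsPartition (mPow m d S) := by
  refine ⟨fun ⟨hne, _⟩ => Set.not_nonempty_empty hne, fun p => ?_⟩
  obtain ⟨α, ⟨hα, hpα⟩, huniq⟩ := hS.2 (diffSet p)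
  refine ⟨relOf m d α, ⟨⟨⟨p, hpα⟩, α, hα, rfl⟩, hpα⟩, ?_⟩
  rintro _ ⟨⟨-, α', hα', rfl⟩, hpα'⟩
  rw [huniq α' ⟨hα', hpα'⟩]

theorem diag_mem_mPow (hm : 1 ≤ m) (hS : IsSAS S) : diag (Fin d → Fin m) ∈ mPow m d S := by
  obtain ⟨α, ⟨hα, hempty⟩, -⟩ := hS.1.2 ∅
  have hα_eq : diag (Fin d → Fin m) = relOf m d α := by
    ext p
    refine ⟨fun h => ?_, fun h => diffSet_eq_empty_iff.mp ?_⟩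
    · change diffSet p ∈ α
      rwa [diffSet_eq_empty_iff.mpr h]
    · have := hS.2.1 α hα _ h ∅ hempty
      rwa [Set.ncard_empty, Set.ncard_eq_zero] at this
  let u : Fin d → Fin m := fun _ => ⟨0, hm⟩
  exact ⟨⟨(u, u), rfl⟩, α, hα, hα_eq⟩

theorem mem_mPow_symm {R : Set ((Fin d → Fin m) × (Fin d → Fin m))} (hR : R ∈ mPow m d S)
    {x y : Fin d → Fin m} (hxy : (x, y) ∈ R) : (y, x) ∈ R := by
  obtain ⟨-, α, -, rfl⟩ := hR
  change diffSet (y, x) ∈ α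
  rwa [diffSet_comm]

theorem isCoherent_mPow (hS : IsSAS S) : IsCoherent (mPow m d S) := by
  classical
  rintro _ ⟨⟨q₀, hq₀⟩, α, hα, rfl⟩ _ ⟨-, β, hβ, rfl⟩ _ ⟨-, γ, hγ, rfl⟩
  refine ⟨{w | (q₀.1, w) ∈ relOf m d β ∧ (w, q₀.2) ∈ relOf m d γ}.ncard, fun q hq => ?_⟩
  change {w | diffSet (q.1, w) ∈ β ∧ diffSet (w, q.2) ∈ γ}.ncard =
    {w | diffSet (q₀.1, w) ∈ β ∧ diffSet (w, q₀.2) ∈ γ}.ncard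
  simp only [diffSet, ncard_setOf_ne_mem_eq_sum]
  exact sum_comp_eq_sum_comp_of_card_filter_eq fun τ hτ =>
    hS.card_filter_tripleType_eq hα hβ hγ hq hq₀ hτ

theorem refines_tensorTrivial_mPow (hS : Setoid.IsPartition S) :
    Refines (tensorTrivial m d) (mPow m d S) := by
  rintro _ ⟨⟨p, hp⟩, _, rfl⟩
  obtain rfl : diffSet p = _ := hp
  obtain ⟨α, ⟨hα, hpα⟩, -⟩ := hS.2 (diffSet p)
  exact ⟨relOf m d α, ⟨⟨p, hpα⟩, α, hα, rfl⟩, fun q (hq : diffSet q = diffSet p) => by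
    change diffSet q ∈ α
    rwa [hq]⟩

theorem refines_mPow_hammingScheme (hS : ∀ α ∈ S, ∀ a ∈ α, ∀ a' ∈ α, a.ncard = a'.ncard) :
    Refines (mPow m d S) (hammingScheme m d) := by
  rintro _ ⟨⟨p, hp⟩, α, hα, rfl⟩
  exact ⟨{q | (diffSet q).ncard = (diffSet p).ncard}, ⟨⟨p, rfl⟩, _, rfl⟩,
    fun q hq => hS α hα _ hq _ hp⟩

end Power

theorem stmt4_general (m d : ℕ) (hm : 1 ≤ m)
    (S : Set (Set (Set (Fin d)))) (hS : IsSAS S) :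
    IsAssocScheme (mPow m d S) ∧
    Refines (tensorTrivial m d) (mPow m d S) ∧
    Refines (mPow m d S) (hammingScheme m d) :=
  ⟨⟨isPartition_mPow hS.1, diag_mem_mPow hm hS, fun _ hR _ _ => mem_mPow_symm hR,
      isCoherent_mPow hS⟩,
    refines_tensorTrivial_mPow hS.1, refines_mPow_hammingScheme hS.2.1⟩

theorem stmt4 (m d : ℕ) (hm : 1 ≤ m) (hd : 1 ≤ d)
    (S : Set (Set (Set (Fin d)))) (hS : IsSAS S) :
    IsAssocScheme (mPow m d S) ∧
    Refines (tensorTrivial m d) (mPow m d S) ∧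
    Refines (mPow m d S) (hammingScheme m d) :=
  stmt4_general m d hm S hS

end Paper
end

section
/- Let 𝔖 be a set association scheme on Ω = [d] with d ≥ 2, and let m ≥ 2. Then Aut([m]^𝔖) = Sym(m) ≀ Aut(𝔖); that is, a permutation g of [m]^d preserves every cell of [m]^𝔖 if and only if there exist π ∈ Aut(𝔖) and permutations σ_1, …, σ_d of [m] such that g(u) = (σ_i(u_{π^{-1}(i)}))_{i ∈ [d]} for all u ∈ [m]^d. -/
open Function

section Hamming
variable {ι α : Type*} [Fintype ι] [DecidableEq ι] [DecidableEq α]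

theorem hammingDist_update_right_add (x y : ι → α) (j : ι) (b : α) :
    hammingDist x (update y j b) + (if x j = b then 1 else 0) =
      hammingDist x y + (if x j = y j then 1 else 0) := by
  simp only [hammingDist, Finset.card_filter, Fintype.sum_eq_add_sum_compl j, update_self]
  have hcompl : ∑ i ∈ {j}ᶜ, (if x i ≠ update y j b i then 1 else 0) =
      ∑ i ∈ {j}ᶜ, (if x i ≠ y i then 1 else 0) :=
    Finset.sum_congr rfl fun i hi => by
      rw [update_of_ne (by simpa using hi)]
  rw [hcompl]
  split_ifs <;> first | omega | contradiction

theorem hammingDist_update_self_right (y : ι → α) {j : ι} {b : α} (hb : b ≠ y j) :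
    hammingDist y (update y j b) = 1 := by
  have := hammingDist_update_right_add y y j b
  simp only [hammingDist_self, if_true, Ne.symm hb, if_false] at this
  omega

theorem hammingDist_update_update_of_ne (y : ι → α) {j j' : ι} (hj : j ≠ j') {b b' : α}
    (hb : b ≠ y j) (hb' : b' ≠ y j') :
    hammingDist (update y j b) (update y j' b') = 2 := by
  have := hammingDist_update_right_add (update y j b) y j' b'
  rw [update_of_ne hj.symm, hammingDist_comm (update y j b) y,
    hammingDist_update_self_right y hb] at this
  simp only [Ne.symm hb', if_false, if_true] at this
  omega

theorem hammingDist_update_update_le (y : ι → α) (j : ι) (b b' : α) :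
    hammingDist (update y j b) (update y j b') ≤ 1 := by
  by_cases hb : b = y j
  · rw [hb, update_eq_self]
    by_cases hb' : b' = y j
    · simp [hb']
    · exact (hammingDist_update_self_right y hb').le
  · have := hammingDist_update_right_add (update y j b) y j b'
    rw [update_self, hammingDist_comm (update y j b) y, hammingDist_update_self_right y hb,
      if_neg hb] at this
    omega

theorem exists_eq_update_of_hammingDist_eq_one {x y : ι → α} (h : hammingDist x y = 1) :
    ∃ j, x j ≠ y j ∧ x = update y j (x j) := by
  obtain ⟨j, hj⟩ := Finset.card_eq_one.mp h
  have hmem : ∀ i, x i ≠ y i ↔ i = j := fun i => by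
    simpa using Finset.ext_iff.mp hj i
  refine ⟨j, (hmem j).mpr rfl, funext fun i => ?_⟩
  by_cases hi : i = j
  · subst hi; simp
  · rw [update_of_ne hi]; exact not_not.mp (mt (hmem i).mp hi)

variable {g : (ι → α) → (ι → α)}

theorem exists_map_update_eq_update (hg : ∀ u v, hammingDist (g u) (g v) = hammingDist u v)
    (z : ι → α) {i : ι} {a : α} (ha : a ≠ z i) :
    ∃ j b, b ≠ g z j ∧ g (update z i a) = update (g z) j b := by
  have h1 : hammingDist (g (update z i a)) (g z) = 1 := by
    rw [hg, hammingDist_comm, hammingDist_update_self_right z ha]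
  obtain ⟨j, hj, hgj⟩ := exists_eq_update_of_hammingDist_eq_one h1
  exact ⟨j, _, hj, hgj⟩

theorem eq_of_map_update_eq_update (hg : ∀ u v, hammingDist (g u) (g v) = hammingDist u v)
    {z : ι → α} {i j j' : ι} {a a' b b' : α} (hb : b ≠ g z j) (hb' : b' ≠ g z j')
    (hgj : g (update z i a) = update (g z) j b) (hgj' : g (update z i a') = update (g z) j' b') :
    j = j' := by
  by_contra hne
  have := hg (update z i a) (update z i a')
  rw [hgj, hgj', hammingDist_update_update_of_ne _ hne hb hb'] at this
  have := hammingDist_update_update_le z i a a'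
  omega

theorem apply_eq_of_map_update_eq_update (hg : ∀ u v, hammingDist (g u) (g v) = hammingDist u v)
    {z : ι → α} {i j : ι} {a b : α} (ha : a ≠ z i)
    (hgj : g (update z i a) = update (g z) j b) (u : ι → α) :
    (u i = a → g u j = b) ∧ (u i = z i → g u j = g z j) := by
  have hu := hammingDist_update_right_add u z i a
  have hgu := hammingDist_update_right_add (g u) (g z) j b
  rw [← hgj, hg, hg] at hgu
  constructor <;> intro hui <;> by_contra hne
  · rw [if_pos hui, if_neg (hui ▸ ha)] at hu
    split_ifs at hgu <;> omega
  · rw [if_neg (hui ▸ ha.symm), if_pos hui] at hu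
    split_ifs at hgu <;> omega

theorem exists_injective_apply_eq_apply_update [Nontrivial α]
    (hg : ∀ u v, hammingDist (g u) (g v) = hammingDist u v) (z : ι → α) :
    ∃ J : ι → ι, Injective J ∧ ∀ u i, g u (J i) = g (update z i (u i)) (J i) := by
  choose a₀ ha₀ using fun i => exists_ne (z i)
  choose J B hB hJB using fun i => exists_map_update_eq_update hg z (ha₀ i)
  have key : ∀ u i, g u (J i) = g (update z i (u i)) (J i) := by
    intro u i
    by_cases hu : u i = z i
    · rw [hu, update_eq_self]
      exact (apply_eq_of_map_update_eq_update hg (ha₀ i) (hJB i) u).2 hu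
    · obtain ⟨j, b, hb, hgj⟩ := exists_map_update_eq_update hg z hu
      obtain rfl := eq_of_map_update_eq_update hg hb (hB i) hgj (hJB i)
      rw [(apply_eq_of_map_update_eq_update hg hu hgj u).1 rfl, hgj, update_self]
  refine ⟨J, fun i i' hJ => ?_, key⟩
  by_contra hne
  have hz := key (update z i' (a₀ i')) i
  rw [update_of_ne hne, update_eq_self, hJ, hJB i', update_self] at hz
  exact hB i' hz

theorem exists_perm_apply_eq_of_hammingDist_eq [Finite α] [Nontrivial α]
    (hg : ∀ u v, hammingDist (g u) (g v) = hammingDist u v) :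
    ∃ (π : Equiv.Perm ι) (σ : ι → Equiv.Perm α), ∀ u, g u = fun i => σ i (u (π⁻¹ i)) := by
  let z : ι → α := Classical.arbitrary _
  obtain ⟨J, hJ, key⟩ := exists_injective_apply_eq_apply_update hg z
  let π : Equiv.Perm ι := Equiv.ofBijective J (Finite.injective_iff_bijective.mp hJ)
  let τ : ι → α → α := fun i a => g (update z i a) (J i)
  have hg_inj : Injective g := fun u v huv =>
    hammingDist_eq_zero.mp (by rw [← hg, huv, hammingDist_self])
  have hτ : ∀ i, Injective (τ i) := by
    intro i a a' haa'
    have : g (update z i a) = g (update z i a') := by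
      funext k
      obtain ⟨l, rfl⟩ := π.surjective k
      rw [Equiv.ofBijective_apply, key _ l, key (update z i a') l]
      by_cases hl : l = i
      · subst hl
        simpa only [update_self] using haa'
      · simp only [update_of_ne hl]
    simpa using congrFun (hg_inj this) i
  refine ⟨π, fun k => Equiv.ofBijective (τ (π⁻¹ k)) (Finite.injective_iff_bijective.mp (hτ _)),
    fun u => funext fun k => ?_⟩
  have hk : J (π⁻¹ k) = k := π.apply_symm_apply k
  calc g u k = g u (J (π⁻¹ k)) := by rw [hk]
    _ = _ := key u _

end Hamming

namespace Paper

section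

variable {m d : ℕ}

theorem ncard_diffSet (p : (Fin d → Fin m) × (Fin d → Fin m)) :
    (diffSet p).ncard = hammingDist p.1 p.2 := by
  rw [hammingDist, ← Set.ncard_coe_finset]
  congr 1
  ext i
  simp [diffSet]

theorem exists_diffSet_eq (hm : 2 ≤ m) (a : Set (Fin d)) :
    ∃ p : (Fin d → Fin m) × (Fin d → Fin m), diffSet p = a := by
  classical
  refine ⟨(fun _ => ⟨0, by omega⟩, fun i => if i ∈ a then ⟨1, by omega⟩ else ⟨0, by omega⟩), ?_⟩
  ext i
  by_cases hi : i ∈ a <;> simp [diffSet, hi, Fin.ext_iff]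

theorem diffSet_map_eq_image {g : (Fin d → Fin m) → (Fin d → Fin m)} {π : Equiv.Perm (Fin d)}
    {σ : Fin d → Equiv.Perm (Fin m)} (hg : ∀ u, g u = fun i => σ i (u (π⁻¹ i)))
    (p : (Fin d → Fin m) × (Fin d → Fin m)) :
    diffSet (g p.1, g p.2) = π '' diffSet p := by
  rw [Equiv.image_eq_preimage_symm]
  ext i
  simp [diffSet, hg, (σ _).injective.ne_iff]

theorem relOf_mem_mPow (hm : 2 ≤ m) {S : Set (Set (Set (Fin d)))} (hS : Setoid.IsPartition S)
    {α : Set (Set (Fin d))} (hα : α ∈ S) : relOf m d α ∈ mPow m d S := by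
  obtain ⟨a, ha⟩ := Set.nonempty_iff_ne_empty.mpr (ne_of_mem_of_not_mem hα hS.1)
  obtain ⟨p, hp⟩ := exists_diffSet_eq (m := m) hm a
  exact ⟨⟨p, show diffSet p ∈ α from hp ▸ ha⟩, α, hα, rfl⟩

theorem forall_mem_mPow_iff (hm : 2 ≤ m) {S : Set (Set (Set (Fin d)))} (hS : Setoid.IsPartition S)
    (g : (Fin d → Fin m) → (Fin d → Fin m)) :
    (∀ R ∈ mPow m d S, ∀ p : (Fin d → Fin m) × (Fin d → Fin m), p ∈ R ↔ (g p.1, g p.2) ∈ R) ↔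
      ∀ α ∈ S, ∀ p : (Fin d → Fin m) × (Fin d → Fin m), diffSet p ∈ α ↔ diffSet (g p.1, g p.2) ∈ α :=
  ⟨fun hg _ hα => hg _ (relOf_mem_mPow hm hS hα), fun hg _ ⟨_, _, hα, hR⟩ => hR ▸ hg _ hα⟩

theorem hammingDist_map_eq {S : Set (Set (Set (Fin d)))} (hS : Setoid.IsPartition S)
    (hcard : ∀ α ∈ S, ∀ a ∈ α, ∀ a' ∈ α, a.ncard = a'.ncard)
    {g : (Fin d → Fin m) → (Fin d → Fin m)}
    (hg : ∀ α ∈ S, ∀ p : (Fin d → Fin m) × (Fin d → Fin m), diffSet p ∈ α ↔ diffSet (g p.1, g p.2) ∈ α)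
    (u v : Fin d → Fin m) : hammingDist (g u) (g v) = hammingDist u v := by
  obtain ⟨α, ⟨hα, huv⟩, -⟩ := hS.2 (diffSet (u, v))
  rw [← ncard_diffSet (u, v), ← ncard_diffSet (g u, g v)]
  exact hcard α hα _ ((hg α hα (u, v)).mp huv) _ huv

end

theorem stmt7_general (m d : ℕ) (hm : 2 ≤ m)
    (S : Set (Set (Set (Fin d)))) (hS : IsSAS S)
    (g : Equiv.Perm (Fin d → Fin m)) :
    (∀ R ∈ mPow m d S, ∀ p : (Fin d → Fin m) × (Fin d → Fin m),
        p ∈ R ↔ (g p.1, g p.2) ∈ R) ↔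
    ∃ (π : Equiv.Perm (Fin d)) (σ : Fin d → Equiv.Perm (Fin m)),
      (∀ α ∈ S, ∀ a : Set (Fin d), a ∈ α ↔ ⇑π '' a ∈ α) ∧
      ∀ u : Fin d → Fin m, g u = fun i => σ i (u (π⁻¹ i)) := by
  have : Nontrivial (Fin m) := Fin.nontrivial_iff_two_le.mpr hm
  rw [forall_mem_mPow_iff hm hS.1]
  constructor
  · intro hg
    obtain ⟨π, σ, hπσ⟩ :=
      exists_perm_apply_eq_of_hammingDist_eq (hammingDist_map_eq hS.1 hS.2.1 hg)
    refine ⟨π, σ, fun α hα a => ?_, hπσ⟩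
    obtain ⟨p, rfl⟩ := exists_diffSet_eq hm a
    rw [← diffSet_map_eq_image hπσ]
    exact hg α hα p
  · rintro ⟨π, σ, hπ, hπσ⟩ α hα p
    rw [diffSet_map_eq_image hπσ]
    exact hπ α hα _

theorem stmt7 (m d : ℕ) (hd : 2 ≤ d) (hm : 2 ≤ m)
    (S : Set (Set (Set (Fin d)))) (hS : IsSAS S)
    (g : Equiv.Perm (Fin d → Fin m)) :
    (∀ R ∈ mPow m d S, ∀ p : (Fin d → Fin m) × (Fin d → Fin m),
        p ∈ R ↔ (g p.1, g p.2) ∈ R) ↔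
    ∃ (π : Equiv.Perm (Fin d)) (σ : Fin d → Equiv.Perm (Fin m)),
      (∀ α ∈ S, ∀ a : Set (Fin d), a ∈ α ↔ ⇑π '' a ∈ α) ∧
      ∀ u : Fin d → Fin m, g u = fun i => σ i (u (π⁻¹ i)) :=
  stmt7_general m d hm S hS g

end Paper
end

section
/- Let 𝔖 be a set association scheme of rank r on a finite set Ω and let G be a subgroup of Sym(k), k ≥ 1. Let Ḡ be the subgroup of Sym(k) consisting of all permutations preserving every orbit of G on [r]^k; then G ≤ Ḡ and Aut(𝔖 ≀ G) = Aut(𝔖) ≀ Ḡ, i.e., a permutation g of Ω × [k] preserves every cell of 𝔖 ≀ G if and only if there exist π ∈ Ḡ and f_1, …, f_k ∈ Aut(𝔖) such that g(ω, j) = (f_j(ω), π(j)) for all (ω, j) ∈ Ω × [k]. -/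
namespace Paper


def setAutGroup {Ω : Type*} (S : Set (Set (Set Ω))) : Subgroup (Equiv.Perm Ω) where
  carrier := {π | ∀ α ∈ S, ∀ a : Set Ω, a ∈ α ↔ ⇑π '' a ∈ α}
  one_mem' := by intro α hα a; simp
  mul_mem' := by
    intro g h hg hh α hα a
    have h1 : ⇑(g * h) '' a = ⇑g '' (⇑h '' a) := by
      rw [Equiv.Perm.coe_mul, Set.image_comp]
    rw [h1]
    exact (hh α hα a).trans (hg α hα (⇑h '' a))
  inv_mem' := by
    intro g hg α hα a
    have h0 := hg α hα (⇑g⁻¹ '' a)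
    have h2 : ⇑g '' (⇑g⁻¹ '' a) = a := by
      simp [← Set.image_comp]
    rw [h2] at h0
    exact h0.symm

def SetSchurian {Ω : Type*} (S : Set (Set (Set Ω))) : Prop :=
  S = Set.range (fun a : Set Ω => {b : Set Ω | ∃ π ∈ setAutGroup S, b = ⇑π '' a})

def fiber {Ω : Type*} {k : ℕ} (s : Set (Ω × Fin k)) (j : Fin k) : Set Ω := {ω | (ω, j) ∈ s}

def wreath {Ω : Type*} (S : Set (Set (Set Ω))) {k : ℕ} (G : Subgroup (Equiv.Perm (Fin k))) :
    Set (Set (Set (Ω × Fin k))) :=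
  {c | ∃ α : Fin k → Set (Set Ω), (∀ j, α j ∈ S) ∧
      c = {s : Set (Ω × Fin k) | ∃ π ∈ G, ∀ j, fiber s j ∈ α (π⁻¹ j)}}

def GbarSet {Ω : Type*} (S : Set (Set (Set Ω))) {k : ℕ} (G : Subgroup (Equiv.Perm (Fin k))) :
    Set (Equiv.Perm (Fin k)) :=
  {σ | ∀ f : Fin k → Set (Set Ω), (∀ j, f j ∈ S) → ∃ π ∈ G, ∀ j, f (σ⁻¹ j) = f (π⁻¹ j)}

/-!
Cells of `𝔖` have constant size, so `{∅}` and `{Ω}` are cells. Hence an automorphism `g` of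
`𝔖 ≀ G` preserves the cells `{∅} ⊕ ⋯ ⊕ {Ω} ⊕ ⋯ ⊕ {∅}`, so it permutes
the columns `Ω × {j}` and has the form `(ω, j) ↦ (f j ω, π j)`. Feeding `g` the cells built from
a single cell `β` of `𝔖` in one coordinate and `{∅}` elsewhere shows `f j ∈ Aut(𝔖)`; feeding it an
arbitrary cell `α₁ ⊕ ⋯ ⊕ α_k` then shows that `π` preserves the `G`-orbit of `(α₁, …, α_k)`.
Conversely such a `g` maps every cell of `𝔖 ≀ G` into itself, and so does `g⁻¹`, which has the
same form because `Ḡ` is a submonoid of the finite group `Sym(k)`, hence closed under inverses.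
-/

section Partition

variable {Ω : Type*} {S : Set (Set (Set Ω))}

lemma singleton_mem_of_ncard_eq (hP : Setoid.IsPartition S)
    (hcard : ∀ α ∈ S, ∀ a ∈ α, ∀ a' ∈ α, a.ncard = a'.ncard) {a : Set Ω}
    (huniq : ∀ b : Set Ω, b.ncard = a.ncard → b = a) : {a} ∈ S := by
  obtain ⟨β, ⟨hβS, haβ⟩, -⟩ := hP.2 a
  convert hβS
  ext b
  exact ⟨fun hb => hb ▸ haβ, fun hb => huniq b (hcard β hβS b hb a haβ)⟩

variable [Finite Ω]

lemma singleton_empty_mem_of_ncard_eq (hP : Setoid.IsPartition S)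
    (hcard : ∀ α ∈ S, ∀ a ∈ α, ∀ a' ∈ α, a.ncard = a'.ncard) : {∅} ∈ S :=
  singleton_mem_of_ncard_eq hP hcard fun b hb =>
    (Set.ncard_eq_zero b.toFinite).mp (hb.trans (Set.ncard_empty Ω))

lemma singleton_univ_mem_of_ncard_eq (hP : Setoid.IsPartition S)
    (hcard : ∀ α ∈ S, ∀ a ∈ α, ∀ a' ∈ α, a.ncard = a'.ncard) : {Set.univ} ∈ S :=
  singleton_mem_of_ncard_eq hP hcard fun b hb =>
    Set.eq_of_subset_of_ncard_le (Set.subset_univ b) hb.ge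

end Partition

lemma mem_setAutGroup_of_image_mem {Ω : Type*} {S : Set (Set (Set Ω))}
    (hP : Setoid.IsPartition S) {f : Equiv.Perm Ω} (hf : ∀ α ∈ S, ∀ a ∈ α, ⇑f '' a ∈ α) :
    f ∈ setAutGroup S := by
  refine fun α hα a => ⟨hf α hα a, fun hfa => ?_⟩
  obtain ⟨γ, ⟨hγS, haγ⟩, -⟩ := hP.2 a
  rwa [Setoid.eq_of_mem_eqv_class hP.2 hα hfa hγS (hf γ hγS a haγ)]

lemma exists_prod_form_of_image_preimage_snd {Ω ι : Type*} [Nonempty Ω]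
    (g : Equiv.Perm (Ω × ι))
    (hg : ∀ j, ∃ j', ⇑g '' (Prod.snd ⁻¹' {j}) = Prod.snd ⁻¹' {j'}) :
    ∃ π : Equiv.Perm ι, ∃ f : ι → Equiv.Perm Ω, ∀ ω j, g (ω, j) = (f j ω, π j) := by
  choose π₀ hπ₀ using hg
  have hsnd : ∀ p, (g p).2 = π₀ p.2 := fun p => by
    have : g p ∈ ⇑g '' (Prod.snd ⁻¹' {p.2}) := Set.mem_image_of_mem g rfl
    rwa [hπ₀] at this
  have hsurj : ∀ ω' j, ∃ ω, g (ω, j) = (ω', π₀ j) := fun ω' j => by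
    have : (ω', π₀ j) ∈ ⇑g '' (Prod.snd ⁻¹' {j}) := by rw [hπ₀]; rfl
    obtain ⟨⟨ω, j'⟩, rfl, h⟩ := this
    exact ⟨ω, h⟩
  have hπ₀ : Function.Bijective π₀ := by
    obtain ⟨ω₀⟩ := ‹Nonempty Ω›
    refine ⟨fun j j' hj => ?_, fun j' => ⟨(g.symm (ω₀, j')).2, ?_⟩⟩
    · obtain ⟨ω, hω⟩ := hsurj ω₀ j
      obtain ⟨ω', hω'⟩ := hsurj ω₀ j'
      rw [← hj, ← hω] at hω'
      exact congrArg Prod.snd (g.injective hω').symm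
    · rw [← hsnd, Equiv.apply_symm_apply]
  have hf : ∀ j, Function.Bijective fun ω => (g (ω, j)).1 := fun j => by
    refine ⟨fun ω ω' h => congrArg Prod.fst (g.injective (Prod.ext h ?_)), fun ω' => ?_⟩
    · rw [hsnd, hsnd]
    · obtain ⟨ω, hω⟩ := hsurj ω' j
      exact ⟨ω, congrArg Prod.fst hω⟩
  exact ⟨Equiv.ofBijective π₀ hπ₀, fun j => Equiv.ofBijective _ (hf j),
    fun ω j => Prod.ext rfl (hsnd (ω, j))⟩

section Fibers

variable {Ω : Type*} {k : ℕ}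

def ofFibers (a : Fin k → Set Ω) : Set (Ω × Fin k) := {p | p.1 ∈ a p.2}

@[simp]
lemma fiber_ofFibers (a : Fin k → Set Ω) (j : Fin k) : fiber (ofFibers a) j = a j := rfl

lemma ofFibers_fiber (s : Set (Ω × Fin k)) : ofFibers (fiber s) = s := rfl

lemma ofFibers_ite_univ_empty (j₀ : Fin k) :
    ofFibers (fun j => if j = j₀ then Set.univ else ∅) = (Prod.snd ⁻¹' {j₀} : Set (Ω × Fin k)) := by
  ext ⟨ω, j⟩
  by_cases h : j = j₀ <;> simp [ofFibers, h]

lemma fiber_image_of_prod_form {g : Equiv.Perm (Ω × Fin k)} {π : Equiv.Perm (Fin k)}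
    {f : Fin k → Equiv.Perm Ω} (hg : ∀ ω j, g (ω, j) = (f j ω, π j))
    (s : Set (Ω × Fin k)) (j : Fin k) :
    fiber (⇑g '' s) j = ⇑(f (π⁻¹ j)) '' fiber s (π⁻¹ j) := by
  ext ω
  constructor
  · rintro ⟨⟨ω', j'⟩, hmem, heq⟩
    rw [hg, Prod.mk.injEq] at heq
    obtain ⟨rfl, rfl⟩ := heq
    rw [Equiv.Perm.coe_inv, Equiv.symm_apply_apply]
    exact ⟨ω', hmem, rfl⟩
  · rintro ⟨ω', hmem, rfl⟩
    exact ⟨(ω', π⁻¹ j), hmem, by simp [hg]⟩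

lemma prod_form_inv {g : Equiv.Perm (Ω × Fin k)} {π : Equiv.Perm (Fin k)}
    {f : Fin k → Equiv.Perm Ω} (hg : ∀ ω j, g (ω, j) = (f j ω, π j)) (ω : Ω) (j : Fin k) :
    g⁻¹ (ω, j) = ((f (π⁻¹ j))⁻¹ ω, π⁻¹ j) := by
  rw [Equiv.Perm.inv_eq_iff_eq, hg]
  simp

end Fibers

section Wreath

variable {Ω : Type*} {S : Set (Set (Set Ω))} {k : ℕ} {G : Subgroup (Equiv.Perm (Fin k))}

/-- The cell `⋃_{π ∈ G} α (π⁻¹ 0) ⊕ ⋯ ⊕ α (π⁻¹ (k - 1))` of `S ≀ G`. -/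
def wreathCell (G : Subgroup (Equiv.Perm (Fin k))) (α : Fin k → Set (Set Ω)) :
    Set (Set (Ω × Fin k)) :=
  {s | ∃ π ∈ G, ∀ j, fiber s j ∈ α (π⁻¹ j)}

lemma wreathCell_mem_wreath {α : Fin k → Set (Set Ω)} (hα : ∀ j, α j ∈ S) :
    wreathCell G α ∈ wreath S G :=
  ⟨α, hα, rfl⟩

lemma ofFibers_mem_wreathCell {α : Fin k → Set (Set Ω)} {a : Fin k → Set Ω}
    (ha : ∀ j, a j ∈ α j) : ofFibers a ∈ wreathCell G α :=
  ⟨1, one_mem G, by simpa using ha⟩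

lemma exists_fiber_image_ofFibers_mem {g : Equiv.Perm (Ω × Fin k)}
    (hg : g ∈ setAutGroup (wreath S G)) {α : Fin k → Set (Set Ω)} (hα : ∀ j, α j ∈ S)
    {a : Fin k → Set Ω} (ha : ∀ j, a j ∈ α j) :
    ∃ ρ ∈ G, ∀ j, fiber (⇑g '' ofFibers a) j ∈ α (ρ⁻¹ j) :=
  (hg _ (wreathCell_mem_wreath hα) _).mp (ofFibers_mem_wreathCell ha)

lemma image_preimage_snd_of_mem_setAutGroup_wreath {g : Equiv.Perm (Ω × Fin k)}
    (hg : g ∈ setAutGroup (wreath S G)) (hempty : {∅} ∈ S) (huniv : {Set.univ} ∈ S)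
    (j₀ : Fin k) : ∃ j₁, ⇑g '' (Prod.snd ⁻¹' {j₀}) = Prod.snd ⁻¹' {j₁} := by
  set b : Fin k → Set Ω := fun j => if j = j₀ then Set.univ else ∅
  have hb : ∀ j, {b j} ∈ S := fun j => by
    by_cases h : j = j₀ <;> simp [b, h, hempty, huniv]
  obtain ⟨ρ, -, hρ⟩ := exists_fiber_image_ofFibers_mem hg hb (fun j => rfl)
  refine ⟨ρ j₀, ?_⟩
  rw [← ofFibers_ite_univ_empty, ← ofFibers_ite_univ_empty, ← ofFibers_fiber (⇑g '' _)]
  congr 1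
  funext j
  rw [Set.mem_singleton_iff.mp (hρ j)]
  simp only [b, Equiv.Perm.inv_eq_iff_eq]

lemma exists_prod_form_of_mem_setAutGroup_wreath {g : Equiv.Perm (Ω × Fin k)}
    (hg : g ∈ setAutGroup (wreath S G)) (hempty : {∅} ∈ S) (huniv : {Set.univ} ∈ S) :
    ∃ π : Equiv.Perm (Fin k), ∃ f : Fin k → Equiv.Perm Ω, ∀ ω j, g (ω, j) = (f j ω, π j) := by
  rcases isEmpty_or_nonempty Ω with hΩ | hΩ
  · exact ⟨1, fun _ => 1, fun ω => isEmptyElim ω⟩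
  · exact exists_prod_form_of_image_preimage_snd g
      (image_preimage_snd_of_mem_setAutGroup_wreath hg hempty huniv)

lemma mem_setAutGroup_of_prod_form {g : Equiv.Perm (Ω × Fin k)}
    (hg : g ∈ setAutGroup (wreath S G)) (hP : Setoid.IsPartition S) (hempty : {∅} ∈ S)
    {π : Equiv.Perm (Fin k)} {f : Fin k → Equiv.Perm Ω}
    (hform : ∀ ω j, g (ω, j) = (f j ω, π j)) (j : Fin k) : f j ∈ setAutGroup S := by
  refine mem_setAutGroup_of_image_mem hP fun β hβ a ha => ?_
  set α : Fin k → Set (Set Ω) := fun j' => if j' = j then β else {∅}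
  have hα : ∀ j', α j' ∈ S := fun j' => by
    by_cases h : j' = j <;> simp [α, h, hβ, hempty]
  obtain ⟨ρ, -, hρ⟩ := exists_fiber_image_ofFibers_mem hg hα
    (a := fun j' => if j' = j then a else ∅) fun j' => by
      by_cases h : j' = j <;> simp [α, h, ha]
  have hj := hρ (π j)
  have hπj : π⁻¹ (π j) = j := π.symm_apply_apply j
  rw [fiber_image_of_prod_form hform, hπj, fiber_ofFibers, if_pos rfl] at hj
  by_cases h : ρ⁻¹ (π j) = j
  · rwa [h, show α j = β from if_pos rfl] at hj
  · -- then `f j '' a = ∅`, so `a = ∅` is fixed by `f j`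
    rw [show α (ρ⁻¹ (π j)) = {∅} from if_neg h, Set.mem_singleton_iff, Set.image_eq_empty] at hj
    rwa [hj, Set.image_empty, ← hj]

lemma mem_GbarSet_of_mem {π : Equiv.Perm (Fin k)} (hπ : π ∈ G) : π ∈ GbarSet S G :=
  fun _ _ => ⟨π, hπ, fun _ => rfl⟩

lemma mem_GbarSet_of_prod_form {g : Equiv.Perm (Ω × Fin k)}
    (hg : g ∈ setAutGroup (wreath S G)) (hP : Setoid.IsPartition S)
    {π : Equiv.Perm (Fin k)} {f : Fin k → Equiv.Perm Ω}
    (hform : ∀ ω j, g (ω, j) = (f j ω, π j)) (hf : ∀ j, f j ∈ setAutGroup S) :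
    π ∈ GbarSet S G := by
  intro α hα
  choose a ha using fun j => Set.nonempty_iff_ne_empty.mpr (ne_of_mem_of_not_mem (hα j) hP.1)
  obtain ⟨ρ, hρG, hρ⟩ := exists_fiber_image_ofFibers_mem hg hα ha
  refine ⟨ρ, hρG, fun j => ?_⟩
  have hj := hρ j
  rw [fiber_image_of_prod_form hform, fiber_ofFibers] at hj
  exact Setoid.eq_of_mem_eqv_class hP.2 (hα _) ((hf _ _ (hα _) _).mp (ha _)) (hα _) hj

variable (S G) in
def gbarSubmonoid : Submonoid (Equiv.Perm (Fin k)) where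
  carrier := GbarSet S G
  one_mem' := mem_GbarSet_of_mem (one_mem G)
  mul_mem' := by
    intro σ τ hσ hτ α hα
    obtain ⟨π, hπ, hτα⟩ := hτ α hα
    obtain ⟨ρ, hρ, hσα⟩ := hσ (fun j => α (π⁻¹ j)) fun j => hα _
    refine ⟨ρ * π, mul_mem hρ hπ, fun j => ?_⟩
    rw [mul_inv_rev, mul_inv_rev, Equiv.Perm.mul_apply, Equiv.Perm.mul_apply, hτα]
    exact hσα j

lemma inv_mem_GbarSet {σ : Equiv.Perm (Fin k)} (hσ : σ ∈ GbarSet S G) :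
    σ⁻¹ ∈ GbarSet S G :=
  Submonoid.powers_le.mpr (show σ ∈ gbarSubmonoid S G from hσ)
    (mem_powers_iff_mem_zpowers.mpr (inv_mem (Subgroup.mem_zpowers σ)))

lemma image_mem_wreathCell_of_prod_form {g : Equiv.Perm (Ω × Fin k)}
    {π : Equiv.Perm (Fin k)} {f : Fin k → Equiv.Perm Ω} (hπ : π ∈ GbarSet S G)
    (hf : ∀ j, f j ∈ setAutGroup S) (hform : ∀ ω j, g (ω, j) = (f j ω, π j))
    {α : Fin k → Set (Set Ω)} (hα : ∀ j, α j ∈ S) {s : Set (Ω × Fin k)}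
    (hs : s ∈ wreathCell G α) : ⇑g '' s ∈ wreathCell G α := by
  obtain ⟨ρ, hρ, hsα⟩ := hs
  obtain ⟨τ, hτ, hπα⟩ := hπ (fun j => α (ρ⁻¹ j)) fun j => hα _
  refine ⟨τ * ρ, mul_mem hτ hρ, fun j => ?_⟩
  rw [fiber_image_of_prod_form hform, mul_inv_rev, Equiv.Perm.mul_apply, ← hπα j]
  exact (hf _ _ (hα _) _).mp (hsα _)

lemma mem_setAutGroup_wreath_of_prod_form {g : Equiv.Perm (Ω × Fin k)}
    {π : Equiv.Perm (Fin k)} {f : Fin k → Equiv.Perm Ω} (hπ : π ∈ GbarSet S G)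
    (hf : ∀ j, f j ∈ setAutGroup S) (hform : ∀ ω j, g (ω, j) = (f j ω, π j)) :
    g ∈ setAutGroup (wreath S G) := by
  rintro _ ⟨α, hα, rfl⟩ s
  refine ⟨image_mem_wreathCell_of_prod_form hπ hf hform hα, fun hgs => ?_⟩
  have := image_mem_wreathCell_of_prod_form (inv_mem_GbarSet hπ)
    (fun j => inv_mem (hf _)) (prod_form_inv hform) hα hgs
  rwa [← Set.image_comp, ← Equiv.Perm.coe_mul, inv_mul_cancel, Equiv.Perm.coe_one,
    Set.image_id] at this

end Wreath

theorem stmt11_general {Ω : Type*} [Finite Ω] (S : Set (Set (Set Ω))) (hS : IsSAS S)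
    (k : ℕ) (G : Subgroup (Equiv.Perm (Fin k))) :
    (∀ π ∈ G, π ∈ GbarSet S G) ∧
    (∀ g : Equiv.Perm (Ω × Fin k),
      g ∈ setAutGroup (wreath S G) ↔
      ∃ π ∈ GbarSet S G, ∃ f : Fin k → Equiv.Perm Ω,
        (∀ j, f j ∈ setAutGroup S) ∧ ∀ (ω : Ω) (j : Fin k), g (ω, j) = (f j ω, π j)) := by
  obtain ⟨hP, hcard, -⟩ := hS
  refine ⟨fun π => mem_GbarSet_of_mem, fun g => ⟨fun hg => ?_, ?_⟩⟩
  · have hempty := singleton_empty_mem_of_ncard_eq hP hcard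
    obtain ⟨π, f, hform⟩ := exists_prod_form_of_mem_setAutGroup_wreath hg hempty
      (singleton_univ_mem_of_ncard_eq hP hcard)
    have hf := mem_setAutGroup_of_prod_form hg hP hempty hform
    exact ⟨π, mem_GbarSet_of_prod_form hg hP hform hf, f, hf, hform⟩
  · rintro ⟨π, hπ, f, hf, hform⟩
    exact mem_setAutGroup_wreath_of_prod_form hπ hf hform

theorem stmt11 {Ω : Type*} [Finite Ω] (S : Set (Set (Set Ω))) (hS : IsSAS S)
    (k : ℕ) (hk : 1 ≤ k) (G : Subgroup (Equiv.Perm (Fin k))) :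
    (∀ π ∈ G, π ∈ GbarSet S G) ∧
    (∀ g : Equiv.Perm (Ω × Fin k),
      g ∈ setAutGroup (wreath S G) ↔
      ∃ π ∈ GbarSet S G, ∃ f : Fin k → Equiv.Perm Ω,
        (∀ j, f j ∈ setAutGroup S) ∧ ∀ (ω : Ω) (j : Fin k), g (ω, j) = (f j ω, π j)) :=
  stmt11_general S hS k G

end Paper
end
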